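/- Let Ω(A) = (H, ◁, ▷, τ) be an extending datum of a bialgebra A such that ▷ satisfies (BE2) (g ▷ (ab) = Σ (g₍₁₎ ▷ a₍₁₎)((g₍₂₎ ◁ a₍₂₎) ▷ b)) and (H, ◁) is a right A-module. Define ψ : H ⊗ A → A ⊗ H by ψ(h ⊗ a) = Σ (h₍₁₎ ▷ a₍₁₎) ⊗ (h₍₂₎ ◁ a₍₂₎). Then (μ_A ⊗ H) ∘ (A ⊗ ψ) ∘ (ψ ⊗ A) = ψ ∘ (H ⊗ μ_A). -/

import Mathlib

open TensorProduct

variable {R A V H : Type*} [CommRing R] [Ring A] [Bialgebra R A]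
  [AddCommGroup V] [Module R V] [AddCommGroup H] [Module R H] [Coalgebra R H]

/-- (μ_A ⊗ V) ∘ (A ⊗ ψ) ∘ (ψ ⊗ A) : (V ⊗ A) ⊗ A → A ⊗ V -/
noncomputable def psiMulLHS (ψ : V ⊗[R] A →ₗ[R] A ⊗[R] V) :
    (V ⊗[R] A) ⊗[R] A →ₗ[R] A ⊗[R] V :=
  TensorProduct.map (LinearMap.mul' R A) LinearMap.id
    ∘ₗ (TensorProduct.assoc R A A V).symm.toLinearMap
    ∘ₗ LinearMap.lTensor A ψ
    ∘ₗ (TensorProduct.assoc R A V A).toLinearMap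
    ∘ₗ LinearMap.rTensor A ψ

/-- ψ ∘ (V ⊗ μ_A) : (V ⊗ A) ⊗ A → A ⊗ V -/
noncomputable def psiMulRHS (ψ : V ⊗[R] A →ₗ[R] A ⊗[R] V) :
    (V ⊗[R] A) ⊗[R] A →ₗ[R] A ⊗[R] V :=
  ψ ∘ₗ LinearMap.lTensor V (LinearMap.mul' R A)
    ∘ₗ (TensorProduct.assoc R V A A).toLinearMap

/-- ∇ = (μ_A ⊗ V) ∘ (A ⊗ ψ) ∘ (A ⊗ V ⊗ η_A) : A ⊗ V → A ⊗ V -/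
noncomputable def nabla (ψ : V ⊗[R] A →ₗ[R] A ⊗[R] V) :
    A ⊗[R] V →ₗ[R] A ⊗[R] V :=
  TensorProduct.map (LinearMap.mul' R A) LinearMap.id
    ∘ₗ (TensorProduct.assoc R A A V).symm.toLinearMap
    ∘ₗ LinearMap.lTensor A ψ
    ∘ₗ LinearMap.lTensor A ((TensorProduct.mk R V A).flip 1)

/-- The comultiplication of the tensor product coalgebra H ⊗ A. -/
noncomputable def comulHA : H ⊗[R] A →ₗ[R] (H ⊗[R] A) ⊗[R] (H ⊗[R] A) :=
  (TensorProduct.tensorTensorTensorComm R H H A A).toLinearMap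
    ∘ₗ TensorProduct.map (Coalgebra.comul : H →ₗ[R] H ⊗[R] H)
        (Coalgebra.comul : A →ₗ[R] A ⊗[R] A)

/-- The comultiplication of the tensor product coalgebra H ⊗ H. -/
noncomputable def comulHH : H ⊗[R] H →ₗ[R] (H ⊗[R] H) ⊗[R] (H ⊗[R] H) :=
  (TensorProduct.tensorTensorTensorComm R H H H H).toLinearMap
    ∘ₗ TensorProduct.map (Coalgebra.comul : H →ₗ[R] H ⊗[R] H)
        (Coalgebra.comul : H →ₗ[R] H ⊗[R] H)

/-- The counit of the tensor product coalgebra H ⊗ A. -/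
noncomputable def counitHA : H ⊗[R] A →ₗ[R] R :=
  (TensorProduct.lid R R).toLinearMap
    ∘ₗ TensorProduct.map (Coalgebra.counit : H →ₗ[R] R)
        (Coalgebra.counit : A →ₗ[R] R)

/-- The counit of the tensor product coalgebra H ⊗ H. -/
noncomputable def counitHH : H ⊗[R] H →ₗ[R] R :=
  (TensorProduct.lid R R).toLinearMap
    ∘ₗ TensorProduct.map (Coalgebra.counit : H →ₗ[R] R)
        (Coalgebra.counit : H →ₗ[R] R)

/-- An extending datum Ω(A) = (H, ◁, ▷, τ) of the bialgebra A
(Agore–Militaru). -/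
structure ExtendingDatum (R A H : Type*) [CommRing R] [Ring A] [Bialgebra R A]
    [AddCommGroup H] [Module R H] [Coalgebra R H] where
  /-- the distinguished element 1_H -/
  one : H
  /-- the multiplication μ_H -/
  mul : H ⊗[R] H →ₗ[R] H
  /-- the action ◁ : H ⊗ A → H -/
  ract : H ⊗[R] A →ₗ[R] H
  /-- the action ▷ : H ⊗ A → A -/
  lact : H ⊗[R] A →ₗ[R] A
  /-- the cocycle τ : H ⊗ H → A -/
  tau : H ⊗[R] H →ₗ[R] A
  comul_one : (Coalgebra.comul : H →ₗ[R] H ⊗[R] H) one = one ⊗ₜ one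
  one_mul' : ∀ h : H, mul (one ⊗ₜ h) = h
  mul_one' : ∀ h : H, mul (h ⊗ₜ one) = h
  ract_comul : TensorProduct.map ract ract ∘ₗ comulHA =
    (Coalgebra.comul : H →ₗ[R] H ⊗[R] H) ∘ₗ ract
  ract_counit : (Coalgebra.counit : H →ₗ[R] R) ∘ₗ ract = counitHA
  lact_comul : TensorProduct.map lact lact ∘ₗ comulHA =
    (Coalgebra.comul : A →ₗ[R] A ⊗[R] A) ∘ₗ lact
  lact_counit : (Coalgebra.counit : A →ₗ[R] R) ∘ₗ lact = counitHA
  tau_comul : TensorProduct.map tau tau ∘ₗ comulHH =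
    (Coalgebra.comul : A →ₗ[R] A ⊗[R] A) ∘ₗ tau
  tau_counit : (Coalgebra.counit : A →ₗ[R] R) ∘ₗ tau = counitHH
  lact_one : ∀ h : H, lact (h ⊗ₜ (1 : A)) =
    algebraMap R A ((Coalgebra.counit : H →ₗ[R] R) h)
  one_lact : ∀ a : A, lact (one ⊗ₜ a) = a
  one_ract : ∀ a : A, ract (one ⊗ₜ a) = ((Coalgebra.counit : A →ₗ[R] R) a) • one
  ract_one : ∀ h : H, ract (h ⊗ₜ (1 : A)) = h
  tau_one : ∀ h : H, tau (h ⊗ₜ one) =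
    algebraMap R A ((Coalgebra.counit : H →ₗ[R] R) h)
  one_tau : ∀ h : H, tau (one ⊗ₜ h) =
    algebraMap R A ((Coalgebra.counit : H →ₗ[R] R) h)

namespace ExtendingDatum

variable (E : ExtendingDatum R A H)

/-- ψ(h ⊗ a) = Σ (h₍₁₎ ▷ a₍₁₎) ⊗ (h₍₂₎ ◁ a₍₂₎). -/
noncomputable def psiE : H ⊗[R] A →ₗ[R] A ⊗[R] H :=
  TensorProduct.map E.lact E.ract ∘ₗ comulHA

/-- σ(h ⊗ g) = Σ τ(h₍₁₎ ⊗ g₍₁₎) ⊗ h₍₂₎g₍₂₎. -/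
noncomputable def sigmaE : H ⊗[R] H →ₗ[R] A ⊗[R] H :=
  TensorProduct.map E.tau E.mul ∘ₗ comulHH

/-- (BE1): (g·h)·l = Σ (g ◁ τ(h₍₁₎ ⊗ l₍₁₎))·(h₍₂₎·l₍₂₎). -/
def BE1 : Prop :=
  E.mul ∘ₗ LinearMap.rTensor H E.mul =
    E.mul ∘ₗ LinearMap.rTensor H E.ract
      ∘ₗ (TensorProduct.assoc R H A H).symm.toLinearMap
      ∘ₗ LinearMap.lTensor H E.sigmaE
      ∘ₗ (TensorProduct.assoc R H H H).toLinearMap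

/-- (BE2): g ▷ (ab) = Σ (g₍₁₎ ▷ a₍₁₎)((g₍₂₎ ◁ a₍₂₎) ▷ b). -/
def BE2 : Prop :=
  E.lact ∘ₗ LinearMap.lTensor H (LinearMap.mul' R A) =
    LinearMap.mul' R A ∘ₗ LinearMap.lTensor A E.lact
      ∘ₗ (TensorProduct.assoc R A H A).toLinearMap
      ∘ₗ LinearMap.rTensor A E.psiE
      ∘ₗ (TensorProduct.assoc R H A A).symm.toLinearMap

/-- (BE3): (g·h) ◁ a = Σ (g ◁ (h₍₁₎ ▷ a₍₁₎))·(h₍₂₎ ◁ a₍₂₎). -/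
def BE3 : Prop :=
  E.ract ∘ₗ LinearMap.rTensor A E.mul =
    E.mul ∘ₗ LinearMap.rTensor H E.ract
      ∘ₗ (TensorProduct.assoc R H A H).symm.toLinearMap
      ∘ₗ LinearMap.lTensor H E.psiE
      ∘ₗ (TensorProduct.assoc R H H A).toLinearMap

/-- (BE4): μ_A ∘ (A ⊗ τ) ∘ (ψ ⊗ H) ∘ (H ⊗ ψ) = μ_A ∘ (A ⊗ ▷) ∘ (σ ⊗ A). -/
def BE4 : Prop :=
  LinearMap.mul' R A ∘ₗ LinearMap.lTensor A E.tau
      ∘ₗ (TensorProduct.assoc R A H H).toLinearMap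
      ∘ₗ LinearMap.rTensor H E.psiE
      ∘ₗ (TensorProduct.assoc R H A H).symm.toLinearMap
      ∘ₗ LinearMap.lTensor H E.psiE
      ∘ₗ (TensorProduct.assoc R H H A).toLinearMap =
    LinearMap.mul' R A ∘ₗ LinearMap.lTensor A E.lact
      ∘ₗ (TensorProduct.assoc R A H A).toLinearMap
      ∘ₗ LinearMap.rTensor A E.sigmaE

/-- (BE5): μ_A ∘ (A ⊗ τ) ∘ (ψ ⊗ H) ∘ (H ⊗ σ) = μ_A ∘ (A ⊗ τ) ∘ (σ ⊗ H). -/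
def BE5 : Prop :=
  LinearMap.mul' R A ∘ₗ LinearMap.lTensor A E.tau
      ∘ₗ (TensorProduct.assoc R A H H).toLinearMap
      ∘ₗ LinearMap.rTensor H E.psiE
      ∘ₗ (TensorProduct.assoc R H A H).symm.toLinearMap
      ∘ₗ LinearMap.lTensor H E.sigmaE
      ∘ₗ (TensorProduct.assoc R H H H).toLinearMap =
    LinearMap.mul' R A ∘ₗ LinearMap.lTensor A E.tau
      ∘ₗ (TensorProduct.assoc R A H H).toLinearMap
      ∘ₗ LinearMap.rTensor H E.sigmaE

/-- (BE6): c_{A,H} ∘ ψ = (◁ ⊗ ▷) ∘ δ_{H⊗A}. -/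
def BE6 : Prop :=
  (TensorProduct.comm R A H).toLinearMap ∘ₗ E.psiE =
    TensorProduct.map E.ract E.lact ∘ₗ comulHA

/-- (BE7): c_{A,H} ∘ σ = (μ_H ⊗ τ) ∘ δ_{H⊗H}. -/
def BE7 : Prop :=
  (TensorProduct.comm R A H).toLinearMap ∘ₗ E.sigmaE =
    TensorProduct.map E.mul E.tau ∘ₗ comulHH

/-- δ_H is multiplicative: δ_H(gh) = Σ g₍₁₎h₍₁₎ ⊗ g₍₂₎h₍₂₎. -/
def ComulMultiplicative : Prop :=
  (Coalgebra.comul : H →ₗ[R] H ⊗[R] H) ∘ₗ E.mul =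
    TensorProduct.map E.mul E.mul ∘ₗ comulHH

/-- ε_H is multiplicative: ε_H(gh) = ε_H(g)ε_H(h). -/
def CounitMultiplicative : Prop :=
  (Coalgebra.counit : H →ₗ[R] R) ∘ₗ E.mul = counitHH

/-- (H, ◁) is a right A-module. -/
def IsRightModule : Prop :=
  (∀ h : H, E.ract (h ⊗ₜ (1 : A)) = h) ∧
    E.ract ∘ₗ LinearMap.rTensor A E.ract =
      E.ract ∘ₗ LinearMap.lTensor H (LinearMap.mul' R A)
        ∘ₗ (TensorProduct.assoc R H A A).toLinearMap

end ExtendingDatum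

/-! For `c ∈ H ⊗ A` and `b ∈ A` write `c · b = (H ⊗ μ_A)(c ⊗ b)`. Since `Δ_A` is multiplicative,
`Δ(c · b) = Σ c₍₁₎ · b₍₁₎ ⊗ c₍₂₎ · b₍₂₎`, and as `ψ = (▷ ⊗ ◁) ∘ Δ_{H⊗A}` the right-hand side is
`Σ ▷(c₍₁₎ · b₍₁₎) ⊗ ◁(c₍₂₎ · b₍₂₎)`. On the left, comultiplicativity of `◁` and coassociativity
give `Σ ▷(c₍₁₎) ▷(◁(c₍₂₎) ⊗ b₍₁₎) ⊗ ◁(◁(c₍₃₎) ⊗ b₍₂₎)`. The module axiom turns the last factor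
into `◁(c₍₃₎ · b₍₂₎)`, and (BE2), read as `▷(c · w) = Σ ▷(c₍₁₎) ▷(◁(c₍₂₎) ⊗ w)`, contracts the
first two to `▷(c₍₁₎ · b₍₁₎)`. -/

open Coalgebra

section

variable {k M C B : Type*} [CommSemiring k] [AddCommMonoid M] [Module k M]
  [AddCommMonoid C] [Module k C] [Coalgebra k C] [Semiring B]

lemma lTensor_mul'_assoc_tmul [Algebra k B] (m : M ⊗[k] B) (b : B) :
    LinearMap.lTensor M (LinearMap.mul' k B) (TensorProduct.assoc k M B B (m ⊗ₜ b)) =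
      LinearMap.lTensor M (LinearMap.mulRight k b) m := by
  induction m with
  | zero => simp
  | tmul x a => simp
  | add m n hm hn => simp_all [add_tmul]

lemma comul_lTensor_mulRight [Bialgebra k B] {ι : Type*} (c : C ⊗[k] B) (b : B)
    (rb : Repr k b ι) :
    comul (LinearMap.lTensor C (LinearMap.mulRight k b) c) =
      ∑ i ∈ rb.index, TensorProduct.map (LinearMap.lTensor C (LinearMap.mulRight k (rb.left i)))
        (LinearMap.lTensor C (LinearMap.mulRight k (rb.right i))) (comul c) := by
  induction c with
  | zero => simp
  | tmul x a =>
    simp only [LinearMap.lTensor_tmul, LinearMap.mulRight_apply, TensorProduct.comul_tmul,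
      AlgebraTensorModule.tensorTensorTensorComm_eq, Bialgebra.comul_mul]
    rw [← (ℛ k x).eq, ← (ℛ k a).eq, ← rb.eq, Finset.sum_mul_sum]
    simp only [Algebra.TensorProduct.tmul_mul_tmul, sum_tmul, tmul_sum, map_sum,
      tensorTensorTensorComm_tmul, map_tmul, LinearMap.lTensor_tmul, LinearMap.mulRight_apply]
    exact Finset.sum_comm
  | add c d hc hd => simp_all [Finset.sum_add_distrib]

lemma Coalgebra.sum_mul_tmul_eq [Algebra k B] (f g : C →ₗ[k] B) (l : C →ₗ[k] M) {c : C}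
    {ι : Type*} {κ Λ : ι → Type*} (rc : Repr k c ι)
    (r₁ : (i : ι) → Repr k (rc.left i) (κ i)) (r₂ : (i : ι) → Repr k (rc.right i) (Λ i)) :
    ∑ i ∈ rc.index, ∑ j ∈ (r₂ i).index,
      (f (rc.left i) * g ((r₂ i).left j)) ⊗ₜ[k] l ((r₂ i).right j) =
    ∑ i ∈ rc.index, ∑ j ∈ (r₁ i).index,
      (f ((r₁ i).left j) * g ((r₁ i).right j)) ⊗ₜ[k] l (rc.right i) := by
  have h := congr_arg
    (_root_.TensorProduct.map (LinearMap.mul' k B ∘ₗ _root_.TensorProduct.map f g) l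
      ∘ₗ (_root_.TensorProduct.assoc k C C C).symm.toLinearMap) (sum_tmul_tmul_eq rc r₁ r₂)
  simpa [map_sum] using h.symm

end

lemma comulHA_eq_comul : (comulHA : H ⊗[R] A →ₗ[R] _) = comul := by
  ext x y
  simp [comulHA, AlgebraTensorModule.tensorTensorTensorComm_eq]

namespace ExtendingDatum

variable (E : ExtendingDatum R A H)

lemma psiE_eq_map_comul : E.psiE = TensorProduct.map E.lact E.ract ∘ₗ comul := by
  rw [psiE, comulHA_eq_comul]

lemma psiE_apply {ι : Type*} (c : H ⊗[R] A) (rc : Repr R c ι) :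
    E.psiE c = ∑ i ∈ rc.index, E.lact (rc.left i) ⊗ₜ E.ract (rc.right i) := by
  simp [psiE_eq_map_comul, ← rc.eq]

lemma comul_ract (c : H ⊗[R] A) :
    comul (E.ract c) = TensorProduct.map E.ract E.ract (comul c) := by
  simpa [comulHA_eq_comul] using (LinearMap.congr_fun E.ract_comul c).symm

lemma psiE_ract_tmul {ι κ : Type*} (c : H ⊗[R] A) (b : A) (rc : Repr R c ι) (rb : Repr R b κ) :
    E.psiE (E.ract c ⊗ₜ b) = ∑ k ∈ rb.index, ∑ i ∈ rc.index,
      E.lact (E.ract (rc.left i) ⊗ₜ rb.left k) ⊗ₜ E.ract (E.ract (rc.right i) ⊗ₜ rb.right k) := by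
  simp only [psiE_eq_map_comul, LinearMap.comp_apply, TensorProduct.comul_tmul,
    AlgebraTensorModule.tensorTensorTensorComm_eq, comul_ract]
  rw [← rc.eq, ← rb.eq]
  simp [sum_tmul, tmul_sum, map_sum]

lemma lact_lTensor_mulRight {ι : Type*} (hBE2 : E.BE2) (c : H ⊗[R] A) (w : A)
    (rc : Repr R c ι) :
    E.lact (LinearMap.lTensor H (LinearMap.mulRight R w) c) =
      ∑ i ∈ rc.index, E.lact (rc.left i) * E.lact (E.ract (rc.right i) ⊗ₜ w) := by
  have h := LinearMap.congr_fun hBE2 (TensorProduct.assoc R H A A (c ⊗ₜ w))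
  simp only [LinearMap.comp_apply, LinearEquiv.coe_coe, lTensor_mul'_assoc_tmul,
    LinearEquiv.symm_apply_apply, LinearMap.rTensor_tmul, E.psiE_apply c rc] at h
  simpa [sum_tmul] using h

lemma ract_ract_tmul (hmod : E.IsRightModule) (c : H ⊗[R] A) (w : A) :
    E.ract (E.ract c ⊗ₜ w) = E.ract (LinearMap.lTensor H (LinearMap.mulRight R w) c) := by
  simpa [lTensor_mul'_assoc_tmul] using LinearMap.congr_fun hmod.2 (c ⊗ₜ w)

end ExtendingDatum

/-- If an extending datum satisfies (BE2) and (H, ◁) is a right A-module, then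
ψ(h ⊗ a) = Σ (h₍₁₎ ▷ a₍₁₎) ⊗ (h₍₂₎ ◁ a₍₂₎) satisfies
(μ_A ⊗ H) ∘ (A ⊗ ψ) ∘ (ψ ⊗ A) = ψ ∘ (H ⊗ μ_A). -/
theorem psiE_mul (E : ExtendingDatum R A H)
    (hBE2 : E.BE2) (hmod : E.IsRightModule) :
    psiMulLHS E.psiE = psiMulRHS E.psiE := by
  refine TensorProduct.ext' fun c b => ?_
  let rc := ℛ R c
  let rb := ℛ R b
  let r₁ := fun i => ℛ R (rc.left i)
  let r₂ := fun i => ℛ R (rc.right i)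
  let ρ := fun w : A => LinearMap.lTensor H (LinearMap.mulRight R w)
  calc psiMulLHS E.psiE (c ⊗ₜ b)
      = ∑ k ∈ rb.index, ∑ i ∈ rc.index, ∑ j ∈ (r₂ i).index,
          (E.lact (rc.left i) * E.lact (E.ract ((r₂ i).left j) ⊗ₜ rb.left k)) ⊗ₜ
            E.ract (ρ (rb.right k) ((r₂ i).right j)) := by
        simp only [psiMulLHS, LinearMap.comp_apply, LinearEquiv.coe_coe, LinearMap.rTensor_tmul,
          E.psiE_apply c rc, sum_tmul, map_sum, TensorProduct.assoc_tmul, LinearMap.lTensor_tmul,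
          E.psiE_ract_tmul _ b (r₂ _) rb, tmul_sum, TensorProduct.assoc_symm_tmul, map_tmul,
          LinearMap.mul'_apply, LinearMap.id_apply, E.ract_ract_tmul hmod]
        rw [Finset.sum_comm]
    _ = ∑ k ∈ rb.index, ∑ i ∈ rc.index, ∑ j ∈ (r₁ i).index,
          (E.lact ((r₁ i).left j) * E.lact (E.ract ((r₁ i).right j) ⊗ₜ rb.left k)) ⊗ₜ
            E.ract (ρ (rb.right k) (rc.right i)) :=
        Finset.sum_congr rfl fun k _ => Coalgebra.sum_mul_tmul_eq E.lact
          (E.lact ∘ₗ (TensorProduct.mk R H A).flip (rb.left k) ∘ₗ E.ract)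
          (E.ract ∘ₗ ρ (rb.right k)) rc r₁ r₂
    _ = ∑ k ∈ rb.index, ∑ i ∈ rc.index,
          E.lact (ρ (rb.left k) (rc.left i)) ⊗ₜ E.ract (ρ (rb.right k) (rc.right i)) := by
        simp only [ρ, E.lact_lTensor_mulRight hBE2 _ _ (r₁ _), sum_tmul]
    _ = psiMulRHS E.psiE (c ⊗ₜ b) := by
        simp only [psiMulRHS, LinearMap.comp_apply, LinearEquiv.coe_coe, lTensor_mul'_assoc_tmul,
          E.psiE_eq_map_comul, comul_lTensor_mulRight _ b rb, ← rc.eq, map_sum, map_tmul, ρ]
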